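/- Let λ = (λ₁,...,λₙ) ∈ Γ₂ with λ₁ ≥ λ₂ ≥ ... ≥ λₙ. If ξ is a symmetric n×n matrix and η := ∑_{i=2}^n σ₂^{ii}(λ)·ξ_{ii} + σ₂^{11}(λ)·ξ_{11}, then −∑_{i≠j} ξ_{ii}ξ_{jj} ≥ (1/(2σ₂(λ)))·(n−1)[2σ₂(λ)ξ_{11} − λ₁η]² / [(n−1)λ₁² + 2(n−2)σ₂(λ)] − η²/(2σ₂(λ)). -/

import Mathlib

open Finset

noncomputable def s1 {n : ℕ} (x : Fin n → ℝ) : ℝ := ∑ i, x i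

noncomputable def s2 {n : ℕ} (x : Fin n → ℝ) : ℝ :=
  ((∑ i, x i) ^ 2 - ∑ i, (x i) ^ 2) / 2

noncomputable def s3 {n : ℕ} (x : Fin n → ℝ) : ℝ :=
  ((∑ i, x i) ^ 3 - 3 * (∑ i, x i) * (∑ i, (x i) ^ 2) + 2 * ∑ i, (x i) ^ 3) / 6

def Gamma2 {n : ℕ} : Set (Fin n → ℝ) := {x | 0 < s1 x ∧ 0 < s2 x}

def Gamma3 {n : ℕ} : Set (Fin n → ℝ) := {x | 0 < s1 x ∧ 0 < s2 x ∧ 0 < s3 x}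

lemma key_lorentz {n : ℕ} (lam a : Fin n → ℝ)
    (hT : 0 < (∑ i, lam i) ^ 2 - ∑ i, (lam i) ^ 2) :
    ((∑ i, lam i) ^ 2 - ∑ i, (lam i) ^ 2) * ((∑ i, a i) ^ 2 - ∑ i, (a i) ^ 2)
      ≤ ((∑ i, lam i) * (∑ i, a i) - ∑ i, lam i * a i) ^ 2 := by
  set p := ∑ i, lam i with hp
  set S := ∑ i, a i with hS
  set Q := ∑ i, (a i) ^ 2 with hQ
  set L2 := ∑ i, (lam i) ^ 2 with hL2
  set P := ∑ i, lam i * a i with hP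
  rcases le_or_gt (S ^ 2 - Q) 0 with hc | hc
  · nlinarith [sq_nonneg (p * S - P)]
  · have hQ0 : 0 ≤ Q := Finset.sum_nonneg fun i _ => sq_nonneg _
    have hSne : S ≠ 0 := by
      intro h
      rw [h] at hc
      nlinarith
    set u := -p / S with hu
    have hpu : p + u * S = 0 := by
      rw [hu, div_mul_cancel₀ _ hSne]; ring
    have h1 : 0 ≤ ∑ i, (lam i + u * a i) ^ 2 :=
      Finset.sum_nonneg fun i _ => sq_nonneg _
    have h2 : ∑ i, (lam i + u * a i) ^ 2 = L2 + 2 * u * P + u ^ 2 * Q := by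
      rw [hL2, hP, hQ, Finset.mul_sum, Finset.mul_sum, ← Finset.sum_add_distrib,
        ← Finset.sum_add_distrib]
      exact Finset.sum_congr rfl fun i _ => by ring
    have h3 : (p ^ 2 - L2) + 2 * u * (p * S - P) + u ^ 2 * (S ^ 2 - Q) ≤ 0 := by
      have : (p ^ 2 - L2) + 2 * u * (p * S - P) + u ^ 2 * (S ^ 2 - Q)
          = (p + u * S) ^ 2 - (L2 + 2 * u * P + u ^ 2 * Q) := by ring
      rw [this, hpu, ← h2]
      nlinarith
    nlinarith [sq_nonneg (u * (S ^ 2 - Q) + (p * S - P)), mul_nonneg hc.le (neg_nonneg.2 h3)]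

lemma alg_step (nR T K B l1 p η S Q A : ℝ) (hT : 0 < T) (hK : 0 < K)
    (hB : B = T * A - l1 * η) (hKd : K = (nR - 1) * l1 ^ 2 + (nR - 2) * T)
    (hkey : T * ((T * K * S + B * T) ^ 2 -
        (T ^ 2 * K ^ 2 * Q - 2 * T * K * B * (T * (nR - 1) * A - T * S)
          + B ^ 2 * (T ^ 2 * ((nR - 2) ^ 2 + (nR - 1)))))
      ≤ (p * (T * K * S + B * T) - (T * K * (p * S - η) - B * (T * (nR - 1) * l1 - T * p))) ^ 2) :
    (nR - 1) * B ^ 2 ≤ K * (T * (Q - S ^ 2) + η ^ 2) := by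
  have hTK : 0 < T ^ 2 * K := by positivity
  have h0 : 0 ≤ T ^ 2 * K * (K * (T * (Q - S ^ 2) + η ^ 2) - (nR - 1) * B ^ 2) := by
    have hident : (p * (T * K * S + B * T) - (T * K * (p * S - η) - B * (T * (nR - 1) * l1 - T * p))) ^ 2
        - T * ((T * K * S + B * T) ^ 2 -
          (T ^ 2 * K ^ 2 * Q - 2 * T * K * B * (T * (nR - 1) * A - T * S)
            + B ^ 2 * (T ^ 2 * ((nR - 2) ^ 2 + (nR - 1)))))
        = T ^ 2 * K * (K * (T * (Q - S ^ 2) + η ^ 2) - (nR - 1) * B ^ 2) := by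
      subst hB hKd; ring
    linarith [hkey, hident.symm.le]
  have h1 := div_nonneg h0 hTK.le
  rw [mul_div_cancel_left₀ _ (ne_of_gt hTK)] at h1
  linarith

lemma final_step (nR T K S Q η B : ℝ) (hT : 0 < T) (hK : 0 < K)
    (hMAIN : (nR - 1) * B ^ 2 ≤ K * (T * (Q - S ^ 2) + η ^ 2)) :
    1 / T * ((nR - 1) * B ^ 2 / K) - η ^ 2 / T ≤ -(S ^ 2 - Q) := by
  have h1 : (nR - 1) * B ^ 2 / K ≤ T * (Q - S ^ 2) + η ^ 2 :=
    (div_le_iff₀ hK).mpr (by linarith [hMAIN])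
  have h2 : 1 / T * ((nR - 1) * B ^ 2 / K) ≤ 1 / T * (T * (Q - S ^ 2) + η ^ 2) := by
    apply mul_le_mul_of_nonneg_left h1 (by positivity)
  have h3 : 1 / T * (T * (Q - S ^ 2) + η ^ 2) = (Q - S ^ 2) + η ^ 2 / T := by
    field_simp
  linarith

theorem stmt_2 (n : ℕ) (hn : 2 ≤ n) (l : Fin n → ℝ)
    (hsort : ∀ i j : Fin n, i ≤ j → l j ≤ l i) (hG : l ∈ Gamma2)
    (ξ : Fin n → Fin n → ℝ) (hsym : ∀ i j, ξ i j = ξ j i) (η : ℝ)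
    (hη : η = ∑ i, (s1 l - l i) * ξ i i) :
    (1 / (2 * s2 l)) *
        (((n : ℝ) - 1) * (2 * s2 l * ξ ⟨0, by omega⟩ ⟨0, by omega⟩ - l ⟨0, by omega⟩ * η) ^ 2 /
          (((n : ℝ) - 1) * (l ⟨0, by omega⟩) ^ 2 + 2 * ((n : ℝ) - 2) * s2 l)) -
      η ^ 2 / (2 * s2 l) ≤
      -∑ p ∈ Finset.univ.offDiag, ξ p.1 p.1 * ξ p.2 p.2 := by
  obtain ⟨hp0, hs20⟩ := hG
  have hn2 : (2:ℝ) ≤ (n:ℝ) := by exact_mod_cast hn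
  set i0 : Fin n := ⟨0, by omega⟩ with hi0
  set p : ℝ := s1 l with hpdef
  set T : ℝ := (∑ i, l i) ^ 2 - ∑ i, (l i) ^ 2 with hTdef
  have hps : p = ∑ i, l i := by rw [hpdef, s1]
  have h2s2 : 2 * s2 l = T := by rw [s2, hTdef]; ring
  have hT : 0 < T := by rw [← h2s2]; linarith
  have hl1pos : 0 < l i0 := by
    have hle : ∀ i : Fin n, l i ≤ l i0 := fun i => hsort i0 i (by simp [hi0, Fin.le_def])
    have hsum_le : p ≤ (n : ℝ) * l i0 := by
      rw [hps]
      calc ∑ i, l i ≤ ∑ _i : Fin n, l i0 := Finset.sum_le_sum fun i _ => hle i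
        _ = (n : ℝ) * l i0 := by simp [Finset.sum_const, mul_comm]
    nlinarith [hp0, hsum_le, hn2]
  set l1 : ℝ := l i0 with hl1
  set A : ℝ := ξ i0 i0 with hA
  set S : ℝ := ∑ i, ξ i i with hSdef
  set Q : ℝ := ∑ i, (ξ i i) ^ 2 with hQdef
  set K : ℝ := ((n:ℝ) - 1) * l1 ^ 2 + ((n:ℝ) - 2) * T with hK
  have hKpos : 0 < K := by
    have h1 : 0 < ((n:ℝ) - 1) * l1 ^ 2 := by
      apply mul_pos (by linarith) (by positivity)
    have h2 : 0 ≤ ((n:ℝ) - 2) * T := mul_nonneg (by linarith) hT.le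
    rw [hK]; linarith
  set B : ℝ := T * A - l1 * η with hB
  set h : Fin n → ℝ := fun i => if i = i0 then T * ((n:ℝ) - 2) else -T with hh
  have hsum_h : ∀ g : Fin n → ℝ, ∑ i, h i * g i = T * ((n:ℝ) - 1) * g i0 - T * ∑ i, g i := by
    intro g
    have step : ∀ i : Fin n, h i * g i
        = (if i = i0 then T * ((n:ℝ) - 1) * g i else 0) + (-T) * g i := by
      intro i
      by_cases hi : i = i0 <;> simp [hh, hi] <;> ring
    rw [Finset.sum_congr rfl fun i _ => step i, Finset.sum_add_distrib,
      Finset.sum_ite_eq' Finset.univ i0 (fun i => T * ((n:ℝ) - 1) * g i), ← Finset.mul_sum]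
    simp only [Finset.mem_univ, if_true]
    ring
  have hsum_h1 : ∑ i, h i = -T := by
    have h1 := hsum_h (fun _ => 1)
    simp only [mul_one, Finset.sum_const, Finset.card_univ, Fintype.card_fin,
      nsmul_eq_mul] at h1
    rw [h1]; ring
  have hsum_hsq : ∑ i, (h i) ^ 2 = T ^ 2 * (((n:ℝ) - 2) ^ 2 + ((n:ℝ) - 1)) := by
    have step : ∀ i : Fin n, (h i) ^ 2
        = (if i = i0 then T ^ 2 * ((n:ℝ) - 2) ^ 2 - T ^ 2 else 0) + T ^ 2 := by
      intro i
      by_cases hi : i = i0 <;> simp [hh, hi] <;> ring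
    rw [Finset.sum_congr rfl fun i _ => step i, Finset.sum_add_distrib,
      Finset.sum_ite_eq' Finset.univ i0 (fun _ => T ^ 2 * ((n:ℝ) - 2) ^ 2 - T ^ 2)]
    simp only [Finset.mem_univ, if_true, Finset.sum_const, Finset.card_univ,
      Fintype.card_fin, nsmul_eq_mul]
    ring
  set w : Fin n → ℝ := fun i => T * K * ξ i i - B * h i with hw
  have hSw : ∑ i, w i = T * K * S + B * T := by
    simp only [hw]
    rw [Finset.sum_sub_distrib, ← Finset.mul_sum, ← Finset.mul_sum, hsum_h1, ← hSdef]
    ring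
  have hPw : ∑ i, l i * w i
      = T * K * (∑ i, l i * ξ i i) - B * (T * ((n:ℝ) - 1) * l1 - T * p) := by
    simp only [hw]
    have step : ∀ i : Fin n, l i * (T * K * ξ i i - B * h i)
        = T * K * (l i * ξ i i) - B * (h i * l i) := by intro i; ring
    rw [Finset.sum_congr rfl fun i _ => step i, Finset.sum_sub_distrib, ← Finset.mul_sum,
      ← Finset.mul_sum, hsum_h l, hps, ← hl1]
  have hQw : ∑ i, (w i) ^ 2 = T ^ 2 * K ^ 2 * Q - 2 * T * K * B * (T * ((n:ℝ) - 1) * A - T * S)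
      + B ^ 2 * (T ^ 2 * (((n:ℝ) - 2) ^ 2 + ((n:ℝ) - 1))) := by
    simp only [hw]
    have step : ∀ i : Fin n, (T * K * ξ i i - B * h i) ^ 2
        = (T ^ 2 * K ^ 2 * (ξ i i) ^ 2 - 2 * T * K * B * (h i * ξ i i)) + B ^ 2 * (h i) ^ 2 := by
      intro i; ring
    rw [Finset.sum_congr rfl fun i _ => step i, Finset.sum_add_distrib,
      Finset.sum_sub_distrib, ← Finset.mul_sum, ← Finset.mul_sum, ← Finset.mul_sum,
      hsum_h (fun i => ξ i i), hsum_hsq, ← hSdef, ← hQdef, ← hA]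
  have hkey := key_lorentz l w (by rw [← hTdef]; exact hT)
  rw [← hTdef, ← hps, hSw, hPw, hQw] at hkey
  have hη' : ∑ i, l i * ξ i i = p * S - η := by
    have : η = p * S - ∑ i, l i * ξ i i := by
      rw [hη, hSdef, Finset.mul_sum, ← Finset.sum_sub_distrib]
      exact Finset.sum_congr rfl fun i _ => by ring
    linarith
  rw [hη'] at hkey
  have hMAIN := alg_step ((n:ℝ)) T K B l1 p η S Q A hT hKpos hB hK hkey
  have hoff : ∑ q ∈ Finset.univ.offDiag, ξ q.1 q.1 * ξ q.2 q.2 = S ^ 2 - Q := by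
    have hfull : ∑ q ∈ Finset.univ ×ˢ Finset.univ, ξ q.1 q.1 * ξ q.2 q.2 = S ^ 2 := by
      rw [Finset.sum_product, hSdef, sq, Finset.sum_mul_sum]
    have hdiag : ∑ q ∈ (Finset.univ (α := Fin n)).diag, ξ q.1 q.1 * ξ q.2 q.2 = Q := by
      rw [Finset.sum_diag, hQdef]
      exact Finset.sum_congr rfl fun i _ => by rw [sq]
    have hsplit : ∑ q ∈ Finset.univ ×ˢ Finset.univ, ξ q.1 q.1 * ξ q.2 q.2
        = ∑ q ∈ (Finset.univ (α := Fin n)).diag, ξ q.1 q.1 * ξ q.2 q.2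
          + ∑ q ∈ Finset.univ.offDiag, ξ q.1 q.1 * ξ q.2 q.2 := by
      rw [← Finset.sum_union (Finset.disjoint_diag_offDiag _), Finset.diag_union_offDiag]
    rw [hfull, hdiag] at hsplit
    linarith
  rw [hoff, h2s2]
  have hKgoal : (((n:ℝ) - 1) * l1 ^ 2 + 2 * ((n:ℝ) - 2) * s2 l) = K := by
    rw [hK, ← h2s2]; ring
  rw [hKgoal]
  exact final_step ((n:ℝ)) T K S Q η B hT hKpos hMAIN
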